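/- If G is a finite simple graph of order n ≥ 4 with girth g(G) ≥ 6 (where an acyclic graph is taken to have infinite girth, hence satisfies this condition) that has a perfect matching, then gp(μ(G)) = n. -/

import Mathlib

open SimpleGraph

variable {V : Type*}

/-- The Mycielskian of a graph `G`: vertices are `some (Sum.inl v)` (original vertices),
`some (Sum.inr v)` (twin vertices), and `none` (the root `u*`). -/
def Mycielskian (G : SimpleGraph V) : SimpleGraph (Option (V ⊕ V)) :=
  SimpleGraph.fromRel (fun x y =>
    (∃ u v, G.Adj u v ∧ x = some (Sum.inl u) ∧ y = some (Sum.inl v)) ∨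
    (∃ u v, G.Adj u v ∧ x = some (Sum.inl u) ∧ y = some (Sum.inr v)) ∨
    (∃ u, x = some (Sum.inr u) ∧ y = none))

/-- `S` is a general position set: no shortest path between two vertices of `S`
contains a third element of `S`. -/
def IsGPSet (G : SimpleGraph V) (S : Set V) : Prop :=
  ∀ u ∈ S, ∀ v ∈ S, ∀ p : G.Walk u v, p.length = G.dist u v →
    ∀ w ∈ S, w ∈ p.support → w = u ∨ w = v

/-- The general position number of `G`: the maximum cardinality of a general position set. -/
noncomputable def gpNumber (G : SimpleGraph V) [Fintype V] : ℕ :=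
  sSup {k | ∃ S : Set V, IsGPSet G S ∧ S.ncard = k}

/-- A gp-set: a general position set of maximum cardinality. -/
def IsGpSet (G : SimpleGraph V) [Fintype V] (S : Set V) : Prop :=
  IsGPSet G S ∧ S.ncard = gpNumber G

/-!
The twins form a general position set of size `n`: they are pairwise non-adjacent and pairwise
at distance two through the root.

For the upper bound, let `A` and `B` be the vertices whose original, resp. twin, lies in a
general position set `S`, and view the perfect matching as a fixed-point-free involution `m`
with `v ~ m v`. Each step of the argument exhibits a third vertex of `S` on an explicit
geodesic of `μ(G)`.

If the root is in `S`, at most one twin is. With no twin, `A ≠ V`: otherwise `G` is the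
matching itself and the root lies on a geodesic between originals of two matching edges. With
a twin `w`, `m` maps `A` into its complement, because two matched vertices of `A` both at
distance two from `w` would close a cycle of length at most `5`. Hence `|S| ≤ n` as `n ≥ 4`.
If the root is not in `S`, then `|S| = |A ∪ B| + |A ∩ B|` and `m` maps `A ∩ B` injectively into
the complement of `A ∪ B`, unless some `u ∈ A ∩ B` has `m u ∈ B`; then `A ∩ B = {u}` and some
vertex lies outside `A ∪ B`.
-/

namespace SimpleGraph

variable {W : Type*} {H : SimpleGraph W}

lemma exists_ne_ne_of_three_le_card (h : 3 ≤ Nat.card W) (a b : W) :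
    ∃ c, c ≠ a ∧ c ≠ b := by
  by_contra! hab
  have hsub : (Set.univ : Set W) ⊆ {a, b} := fun c _ => by
    by_cases hca : c = a
    · exact Or.inl hca
    · exact Or.inr (hab c hca)
  have := (Set.ncard_le_ncard hsub).trans (Set.ncard_insert_le a {b})
  rw [Set.ncard_univ, Set.ncard_singleton] at this
  omega

lemma Walk.two_le_length {x y : W} (p : H.Walk x y) (hne : x ≠ y) (hadj : ¬H.Adj x y) :
    2 ≤ p.length := by
  by_contra! h
  interval_cases hp : p.length
  · exact hne (Walk.eq_of_length_eq_zero hp)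
  · exact hadj (Walk.adj_of_length_eq_one hp)

lemma Walk.three_le_length {x y : W} (p : H.Walk x y) (hne : x ≠ y) (hadj : ¬H.Adj x y)
    (hc : ∀ c, H.Adj x c → ¬H.Adj c y) : 3 ≤ p.length := by
  cases p with
  | nil => exact absurd rfl hne
  | cons h q =>
    cases q with
    | nil => exact absurd h hadj
    | cons h' q' =>
      cases q' with
      | nil => exact absurd h' (hc _ h)
      | cons => simp

lemma Walk.mem_of_forall_adj_mem {s : Set W} (hs : ∀ a ∈ s, ∀ b, H.Adj a b → b ∈ s) {x y : W}
    (p : H.Walk x y) (hx : x ∈ s) : y ∈ s := by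
  induction p with
  | nil => exact hx
  | cons h _ ih => exact ih (hs _ hx _ h)

lemma not_adj_of_four_le_egirth (hg : 4 ≤ H.egirth) {a b c : W} (hab : H.Adj a b)
    (hbc : H.Adj b c) : ¬H.Adj c a := fun hca => by
  have hcyc : (Walk.cons hab (.cons hbc (.cons hca .nil))).IsCycle := by
    simp [Walk.isCycle_def, Walk.isTrail_def, hab.ne, hbc.ne, hca.ne, hab.ne', hca.ne']
  have := hg.trans (egirth_le_length hcyc)
  norm_num at this

/-- Otherwise `u c w c' v` is a `5`-cycle, or `u v c` a triangle when `c = c'`. -/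
lemma adj_or_adj_of_six_le_egirth (hg : 6 ≤ H.egirth) {u v c c' w : W} (huv : H.Adj u v)
    (huc : H.Adj u c) (hcw : H.Adj c w) (hvc' : H.Adj v c') (hc'w : H.Adj c' w) :
    H.Adj u w ∨ H.Adj v w := by
  by_contra! ⟨huw, hvw⟩
  have hcc' : c ≠ c' := by
    rintro rfl
    exact not_adj_of_four_le_egirth (le_trans (by norm_num) hg) huv hvc' huc.symm
  have hcyc : (Walk.cons huc (.cons hcw (.cons hc'w.symm (.cons hvc'.symm
      (.cons huv.symm .nil))))).IsCycle := by
    have hwu : w ≠ u := by rintro rfl; exact hvw huv.symm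
    have hwv : w ≠ v := by rintro rfl; exact huw huv
    have hc'u : c' ≠ u := by rintro rfl; exact huw hc'w
    have hcv : c ≠ v := by rintro rfl; exact hvw hcw
    simp [Walk.isCycle_def, Walk.isTrail_def, huv.ne, huc.ne, hcw.ne, huv.ne', huc.ne',
      hvc'.ne', hc'w.ne', hcc', hwu, hwu.symm, hwv, hc'u, hc'u.symm, hcv]
  have := hg.trans (egirth_le_length hcyc)
  norm_num at this

lemma exists_involutive_adj_of_perfect_matching {G : SimpleGraph W} {M : Set (Sym2 W)}
    (hMG : M ⊆ G.edgeSet) (hMdisj : ∀ e ∈ M, ∀ f ∈ M, e ≠ f → ∀ v : W, v ∈ e → v ∉ f)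
    (hMcov : ∀ v : W, ∃ e ∈ M, v ∈ e) :
    ∃ m : W → W, (∀ v, G.Adj v (m v)) ∧ Function.Involutive m := by
  have hpartner : ∀ v, ∃ w, s(v, w) ∈ M := fun v => by
    obtain ⟨e, he, hve⟩ := hMcov v
    obtain ⟨w, rfl⟩ := Sym2.mem_iff_exists.mp hve
    exact ⟨w, he⟩
  choose m hm using hpartner
  have hadj : ∀ v, G.Adj v (m v) := fun v => hMG (hm v)
  refine ⟨m, hadj, fun v => ?_⟩
  by_contra hne
  have hedge : s(v, m v) ≠ s(m v, m (m v)) := by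
    simp [(hadj v).ne, Ne.symm hne]
  exact hMdisj _ (hm v) _ (hm (m v)) hedge (m v) (Sym2.mem_mk_right _ _) (Sym2.mem_mk_left _ _)

end SimpleGraph

section GeneralPosition

variable {W : Type*} {H : SimpleGraph W}

lemma IsGPSet.notMem_of_mem_support {S : Set W} (hS : IsGPSet H S) {x y w : W} (hx : x ∈ S)
    (hy : y ∈ S) (p : H.Walk x y) (hp : ∀ q : H.Walk x y, p.length ≤ q.length)
    (hw : w ∈ p.support) (hwx : w ≠ x) (hwy : w ≠ y) : w ∉ S := by
  intro hwS
  have hdist : p.length = H.dist x y := by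
    obtain ⟨q, hq⟩ := Reachable.exists_walk_length_eq_dist ⟨p⟩
    exact le_antisymm (hq ▸ hp q) (dist_le p)
  rcases hS x hx y hy p hdist w hwS hw with h | h <;> contradiction

lemma isGPSet_of_isIndepSet {S : Set W} (hind : H.IsIndepSet S)
    (hclose : ∀ x ∈ S, ∀ y ∈ S, ∃ q : H.Walk x y, q.length ≤ 2) : IsGPSet H S := by
  intro x hx y hy p hp w hwS hw
  obtain ⟨q, hq⟩ := hclose x hx y hy
  have hlen : p.length ≤ 2 := hp ▸ (dist_le q).trans hq
  match p, hlen with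
  | .nil, _ => simp_all
  | .cons _ .nil, _ => simp_all
  | .cons hxz (.cons _ .nil), _ =>
    simp only [Walk.support_cons, Walk.support_nil, List.mem_cons,
      List.not_mem_nil, or_false] at hw
    rcases hw with rfl | rfl | rfl
    · exact Or.inl rfl
    · exact absurd hxz (hind hx hwS hxz.ne)
    · exact Or.inr rfl

lemma gpNumber_eq_of_forall_ncard_le [Fintype W] {k : ℕ}
    (hle : ∀ S, IsGPSet H S → S.ncard ≤ k) {S₀ : Set W} (hS₀ : IsGPSet H S₀)
    (hk : S₀.ncard = k) : gpNumber H = k := by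
  have hbdd : k ∈ upperBounds {k | ∃ S : Set W, IsGPSet H S ∧ S.ncard = k} := by
    rintro _ ⟨S, hS, rfl⟩
    exact hle S hS
  exact le_antisymm (csSup_le ⟨k, S₀, hS₀, hk⟩ hbdd) (le_csSup ⟨k, hbdd⟩ ⟨S₀, hS₀, hk⟩)

end GeneralPosition

namespace Mycielskian

variable {G : SimpleGraph V}

def orig (u : V) : Option (V ⊕ V) := some (Sum.inl u)
def twin (u : V) : Option (V ⊕ V) := some (Sum.inr u)

lemma orig_injective : Function.Injective (orig : V → Option (V ⊕ V)) := fun _ _ h => by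
  simpa [orig] using h
lemma twin_injective : Function.Injective (twin : V → Option (V ⊕ V)) := fun _ _ h => by
  simpa [twin] using h

@[simp] lemma orig_inj {u v : V} : orig u = orig v ↔ u = v := orig_injective.eq_iff
@[simp] lemma twin_inj {u v : V} : twin u = twin v ↔ u = v := twin_injective.eq_iff
@[simp] lemma orig_ne_twin {u v : V} : orig u ≠ twin v := by simp [orig, twin]
@[simp] lemma twin_ne_orig {u v : V} : twin u ≠ orig v := by simp [orig, twin]
@[simp] lemma orig_ne_none {u : V} : orig u ≠ none := by simp [orig]
@[simp] lemma twin_ne_none {u : V} : twin u ≠ none := by simp [twin]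
@[simp] lemma none_ne_orig {u : V} : none ≠ orig u := by simp [orig]
@[simp] lemma none_ne_twin {u : V} : none ≠ twin u := by simp [twin]

@[simp] lemma adj_orig_orig {u v : V} : (Mycielskian G).Adj (orig u) (orig v) ↔ G.Adj u v := by
  simpa [Mycielskian, orig, G.adj_comm v u] using G.ne_of_adj
@[simp] lemma adj_orig_twin {u v : V} : (Mycielskian G).Adj (orig u) (twin v) ↔ G.Adj u v := by
  simp [Mycielskian, orig, twin]
@[simp] lemma adj_twin_orig {u v : V} : (Mycielskian G).Adj (twin u) (orig v) ↔ G.Adj u v := by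
  simp [Mycielskian, orig, twin, G.adj_comm]
@[simp] lemma not_adj_twin_twin {u v : V} : ¬(Mycielskian G).Adj (twin u) (twin v) := by
  simp [Mycielskian, twin]
@[simp] lemma adj_twin_none {u : V} : (Mycielskian G).Adj (twin u) none := by
  simp [Mycielskian, twin]
@[simp] lemma adj_none_twin {u : V} : (Mycielskian G).Adj none (twin u) := by
  simp [Mycielskian, twin]
@[simp] lemma not_adj_orig_none {u : V} : ¬(Mycielskian G).Adj (orig u) none := by
  simp [Mycielskian, orig]
@[simp] lemma not_adj_none_orig {u : V} : ¬(Mycielskian G).Adj none (orig u) := by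
  simp [Mycielskian, orig]

/-- Collapses each vertex with its twin; `d` is a junk value for the root. -/
def proj (d : V) (x : Option (V ⊕ V)) : V := x.elim d (Sum.elim id id)

lemma adj_proj (d : V) {x y : Option (V ⊕ V)} (h : (Mycielskian G).Adj x y) (hx : x ≠ none)
    (hy : y ≠ none) : G.Adj (proj d x) (proj d y) := by
  match x, y with
  | none, _ => exact absurd rfl hx
  | _, none => exact absurd rfl hy
  | some (.inl _), some (.inl _) => exact adj_orig_orig.mp h
  | some (.inl _), some (.inr _) => exact adj_orig_twin.mp h
  | some (.inr _), some (.inl _) => exact adj_twin_orig.mp h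
  | some (.inr _), some (.inr _) => exact absurd h not_adj_twin_twin

lemma exists_walk_proj (d : V) {x y : Option (V ⊕ V)} (p : (Mycielskian G).Walk x y)
    (hp : none ∉ p.support) : ∃ q : G.Walk (proj d x) (proj d y), q.length = p.length := by
  induction p with
  | nil => exact ⟨.nil, rfl⟩
  | @cons a b _ h p ih =>
    simp only [Walk.support_cons, List.mem_cons, not_or] at hp
    obtain ⟨q, hq⟩ := ih hp.2
    have hb : b ≠ none := fun hb => hp.2 (hb ▸ p.start_mem_support)
    exact ⟨.cons (adj_proj d h (Ne.symm hp.1) hb) q, by simp [hq]⟩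

lemma two_le_length_orig_none {u : V} (p : (Mycielskian G).Walk (orig u) none) :
    2 ≤ p.length :=
  p.two_le_length (by simp) (by simp)

/-- Walks avoiding the root project to `G`; a walk through it needs two steps to reach it
from an original vertex. -/
lemma three_le_length_orig_twin {u w : V} (hfar : ∀ q : G.Walk u w, 3 ≤ q.length)
    (p : (Mycielskian G).Walk (orig u) (twin w)) : 3 ≤ p.length := by
  by_cases hp : none ∈ p.support
  · obtain ⟨q, r, rfl⟩ := Walk.mem_support_iff_exists_append.mp hp
    have hr : r.length ≠ 0 := fun h => by simpa using Walk.eq_of_length_eq_zero h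
    have := two_le_length_orig_none q
    rw [Walk.length_append]
    omega
  · obtain ⟨q, hq⟩ := exists_walk_proj u p hp
    exact hq ▸ hfar q

lemma four_le_length_orig_orig {u v : V} (hfar : ∀ q : G.Walk u v, 4 ≤ q.length)
    (p : (Mycielskian G).Walk (orig u) (orig v)) : 4 ≤ p.length := by
  by_cases hp : none ∈ p.support
  · obtain ⟨q, r, rfl⟩ := Walk.mem_support_iff_exists_append.mp hp
    have := two_le_length_orig_none q
    have := two_le_length_orig_none r.reverse
    rw [Walk.length_append]
    rw [Walk.length_reverse] at this
    omega
  · obtain ⟨q, hq⟩ := exists_walk_proj u p hp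
    exact hq ▸ hfar q

lemma isGPSet_range_twin : IsGPSet (Mycielskian G) (Set.range twin) := by
  refine isGPSet_of_isIndepSet ?_ ?_
  · rintro _ ⟨a, rfl⟩ _ ⟨b, rfl⟩ _
    exact not_adj_twin_twin
  · rintro _ ⟨a, rfl⟩ _ ⟨b, rfl⟩
    exact ⟨.cons adj_twin_none (.cons adj_none_twin .nil), le_rfl⟩

variable {S : Set (Option (V ⊕ V))} {m : V → V}

lemma orig_notMem_of_adj (hS : IsGPSet (Mycielskian G) S) {u x : V} (hu : orig u ∈ S)
    (hu' : twin u ∈ S) (hx : G.Adj u x) : orig x ∉ S :=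
  hS.notMem_of_mem_support hu hu'
    (.cons (adj_orig_orig.2 hx) (.cons (adj_orig_twin.2 hx.symm) .nil))
    (fun q => by simpa using q.two_le_length (by simp) (by simp)) (by simp) (by simp [hx.ne'])
    (by simp)

lemma none_notMem_of_twin_mem (hS : IsGPSet (Mycielskian G) S) {a b : V} (ha : twin a ∈ S)
    (hb : twin b ∈ S) (hab : a ≠ b) : none ∉ S :=
  hS.notMem_of_mem_support ha hb (.cons adj_twin_none (.cons adj_none_twin .nil))
    (fun q => by simpa using q.two_le_length (by simpa using hab) (by simp)) (by simp) (by simp)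
    (by simp)

lemma twin_notMem_of_adj_of_adj (hS : IsGPSet (Mycielskian G) S) {u x y : V}
    (hu : orig u ∈ S) (hx : G.Adj u x) (hy : G.Adj u y) (hxy : x ≠ y) (hxS : twin x ∈ S) :
    twin y ∉ S := fun hyS =>
  hS.notMem_of_mem_support hxS hyS
    (.cons (adj_twin_orig.2 hx.symm) (.cons (adj_orig_twin.2 hy) .nil))
    (fun q => by simpa using q.two_le_length (by simpa using hxy) (by simp)) (by simp) (by simp)
    (by simp) hu

lemma orig_notMem_of_common_adj (hS : IsGPSet (Mycielskian G) S) {u v c : V}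
    (hu : orig u ∈ S) (hv : orig v ∈ S) (huv : u ≠ v) (hnadj : ¬G.Adj u v) (huc : G.Adj u c)
    (hcv : G.Adj c v) : orig c ∉ S :=
  hS.notMem_of_mem_support hu hv (.cons (adj_orig_orig.2 huc) (.cons (adj_orig_orig.2 hcv) .nil))
    (fun q => by simpa using q.two_le_length (by simpa using huv) (by simpa using hnadj))
    (by simp) (by simp [huc.ne']) (by simp [hcv.ne])

lemma twin_notMem_of_common_adj (hS : IsGPSet (Mycielskian G) S) {u v c : V}
    (hu : orig u ∈ S) (hv : orig v ∈ S) (huv : u ≠ v) (hnadj : ¬G.Adj u v) (huc : G.Adj u c)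
    (hcv : G.Adj c v) : twin c ∉ S :=
  hS.notMem_of_mem_support hu hv (.cons (adj_orig_twin.2 huc) (.cons (adj_twin_orig.2 hcv) .nil))
    (fun q => by simpa using q.two_le_length (by simpa using huv) (by simpa using hnadj))
    (by simp) (by simp) (by simp)

lemma twin_notMem_of_none_mem (hS : IsGPSet (Mycielskian G) S) {u x : V} (hu : orig u ∈ S)
    (hr : none ∈ S) (hx : G.Adj u x) : twin x ∉ S :=
  hS.notMem_of_mem_support hu hr (.cons (adj_orig_twin.2 hx) (.cons adj_twin_none .nil))
    (fun q => by simpa using two_le_length_orig_none q) (by simp) (by simp) (by simp)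

lemma twin_notMem_of_three_le_length (hS : IsGPSet (Mycielskian G) S) {u w x : V}
    (hu : orig u ∈ S) (hw : twin w ∈ S) (hfar : ∀ q : G.Walk u w, 3 ≤ q.length)
    (hx : G.Adj u x) (hxw : x ≠ w) : twin x ∉ S :=
  hS.notMem_of_mem_support hu hw
    (.cons (adj_orig_twin.2 hx) (.cons adj_twin_none (.cons adj_none_twin .nil)))
    (fun q => by simpa using three_le_length_orig_twin hfar q) (by simp) (by simp) (by simp [hxw])

lemma none_notMem_of_three_le_length (hS : IsGPSet (Mycielskian G) S) {u w x : V}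
    (hu : orig u ∈ S) (hw : twin w ∈ S) (hfar : ∀ q : G.Walk u w, 3 ≤ q.length)
    (hx : G.Adj u x) : none ∉ S :=
  hS.notMem_of_mem_support hu hw
    (.cons (adj_orig_twin.2 hx) (.cons adj_twin_none (.cons adj_none_twin .nil)))
    (fun q => by simpa using three_le_length_orig_twin hfar q) (by simp) (by simp) (by simp)

lemma orig_notMem_of_three_le_length (hS : IsGPSet (Mycielskian G) S) {u w c t : V}
    (hu : orig u ∈ S) (hw : twin w ∈ S) (hfar : ∀ q : G.Walk u w, 3 ≤ q.length)
    (huc : G.Adj u c) (hct : G.Adj c t) (htw : G.Adj t w) (htu : t ≠ u) : orig t ∉ S :=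
  hS.notMem_of_mem_support hu hw
    (.cons (adj_orig_orig.2 huc) (.cons (adj_orig_orig.2 hct) (.cons (adj_orig_twin.2 htw) .nil)))
    (fun q => by simpa using three_le_length_orig_twin hfar q) (by simp) (by simp [htu])
    (by simp)

lemma twin_notMem_of_four_le_length (hS : IsGPSet (Mycielskian G) S) {u v x y : V}
    (hu : orig u ∈ S) (hv : orig v ∈ S) (hfar : ∀ q : G.Walk u v, 4 ≤ q.length)
    (hx : G.Adj u x) (hy : G.Adj v y) : twin x ∉ S :=
  hS.notMem_of_mem_support hu hv (.cons (adj_orig_twin.2 hx) (.cons adj_twin_none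
      (.cons adj_none_twin (.cons (adj_twin_orig.2 hy.symm) .nil))))
    (fun q => by simpa using four_le_length_orig_orig hfar q) (by simp) (by simp) (by simp)

lemma none_notMem_of_four_le_length (hS : IsGPSet (Mycielskian G) S) {u v x y : V}
    (hu : orig u ∈ S) (hv : orig v ∈ S) (hfar : ∀ q : G.Walk u v, 4 ≤ q.length)
    (hx : G.Adj u x) (hy : G.Adj v y) : none ∉ S :=
  hS.notMem_of_mem_support hu hv (.cons (adj_orig_twin.2 hx) (.cons adj_twin_none
      (.cons adj_none_twin (.cons (adj_twin_orig.2 hy.symm) .nil))))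
    (fun q => by simpa using four_le_length_orig_orig hfar q) (by simp) (by simp) (by simp)


lemma ncard_le_ncard_preimage_add [Finite V] (S : Set (Option (V ⊕ V))) :
    S.ncard ≤ (orig ⁻¹' S).ncard + (twin ⁻¹' S).ncard + (S ∩ {none}).ncard := by
  have hsub : S ⊆ orig '' (orig ⁻¹' S) ∪ twin '' (twin ⁻¹' S) ∪ (S ∩ {none}) := by
    rintro (_ | _ | _) hx
    · exact Or.inr ⟨hx, rfl⟩
    · exact Or.inl (Or.inl ⟨_, hx, rfl⟩)
    · exact Or.inl (Or.inr ⟨_, hx, rfl⟩)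
  calc S.ncard ≤ _ := Set.ncard_le_ncard hsub
    _ ≤ (orig '' (orig ⁻¹' S) ∪ twin '' (twin ⁻¹' S)).ncard + (S ∩ {none}).ncard :=
      Set.ncard_union_le _ _
    _ ≤ _ := by
      gcongr
      exact (Set.ncard_union_le _ _).trans (add_le_add Set.ncard_image_le Set.ncard_image_le)

lemma orig_preimage_ne_univ_of_none_mem [Finite V] (hg : 4 ≤ G.egirth)
    (hm : ∀ v, G.Adj v (m v)) (hmm : Function.Involutive m) (hn : 3 ≤ Nat.card V)
    (hS : IsGPSet (Mycielskian G) S) (hr : none ∈ S) : orig ⁻¹' S ≠ Set.univ := by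
  intro hA
  have hall : ∀ v, orig v ∈ S := Set.eq_univ_iff_forall.mp hA
  have hnbr : ∀ z y, G.Adj z y → y = m z := by
    intro z y hzy
    by_contra hy
    exact orig_notMem_of_common_adj hS (hall y) (hall (m z)) hy
      (fun h => not_adj_of_four_le_egirth hg hzy.symm (hm z) h.symm) hzy.symm (hm z) (hall z)
  obtain ⟨x⟩ : Nonempty V := (Nat.card_pos_iff.mp (by omega)).1
  obtain ⟨y, hyx, hym⟩ := exists_ne_ne_of_three_le_card hn x (m x)
  have hclosed : ∀ a ∈ ({x, m x} : Set V), ∀ b, G.Adj a b → b ∈ ({x, m x} : Set V) := by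
    rintro a (rfl | rfl) b hab <;> simp [hnbr _ _ hab, hmm _]
  have hfar : ∀ q : G.Walk x y, 4 ≤ q.length := fun q =>
    absurd (q.mem_of_forall_adj_mem hclosed (by simp)) (by simp [hyx, hym])
  exact none_notMem_of_four_le_length hS (hall x) (hall y) hfar (hm x) (hm y) hr

lemma orig_map_notMem_of_none_mem (hg : 6 ≤ G.egirth) (hm : ∀ v, G.Adj v (m v))
    (hS : IsGPSet (Mycielskian G) S) (hr : none ∈ S) {u w : V} (hw : twin w ∈ S)
    (hu : orig u ∈ S) : orig (m u) ∉ S := by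
  intro hmu
  have hne : ∀ a, orig a ∈ S → ∀ b, G.Adj a b → b ≠ w := fun a ha b hab hb =>
    twin_notMem_of_none_mem hS ha hr hab (hb ▸ hw)
  have hcommon : ∀ a b, orig a ∈ S → orig b ∈ S → G.Adj a b → ∃ c, G.Adj a c ∧ G.Adj c w := by
    intro a b ha hb hab
    by_contra! h
    exact none_notMem_of_three_le_length hS ha hw
      (Walk.three_le_length · (hne b hb a hab.symm) (hne a ha w · rfl) h) hab hr
  obtain ⟨c, huc, hcw⟩ := hcommon u (m u) hu hmu (hm u)
  obtain ⟨c', hvc', hc'w⟩ := hcommon (m u) u hmu hu (hm u).symm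
  rcases adj_or_adj_of_six_le_egirth hg (hm u) huc hcw hvc' hc'w with h | h
  exacts [hne u hu w h rfl, hne (m u) hmu w h rfl]

lemma ncard_le_of_none_mem [Finite V] (hg : 6 ≤ G.egirth) (hm : ∀ v, G.Adj v (m v))
    (hmm : Function.Involutive m) (hn : 4 ≤ Nat.card V) (hS : IsGPSet (Mycielskian G) S)
    (hr : none ∈ S) : S.ncard ≤ Nat.card V := by
  have hsplit := ncard_le_ncard_preimage_add S
  have hroot : (S ∩ {none}).ncard ≤ 1 :=
    (Set.ncard_le_ncard Set.inter_subset_right).trans (Set.ncard_singleton _).le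
  have htwin : (twin ⁻¹' S).Subsingleton := fun a ha b hb =>
    by_contra fun hab => none_notMem_of_twin_mem hS ha hb hab hr
  rcases htwin.eq_empty_or_singleton with hB | ⟨w, hB⟩
  · have := Set.ncard_lt_card (orig_preimage_ne_univ_of_none_mem (le_trans (by norm_num) hg)
      hm hmm (by omega) hS hr)
    rw [hB, Set.ncard_empty] at hsplit
    omega
  · have hw : twin w ∈ S := by simp [← Set.mem_preimage, hB]
    have hhalf : (orig ⁻¹' S).ncard ≤ (orig ⁻¹' S)ᶜ.ncard :=
      Set.ncard_le_ncard_of_injOn m (fun u hu => orig_map_notMem_of_none_mem hg hm hS hr hw hu)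
        hmm.injective.injOn
    have := Set.ncard_add_ncard_compl (orig ⁻¹' S)
    rw [hB, Set.ncard_singleton] at hsplit
    omega


lemma inter_preimage_subset_singleton (hg : 6 ≤ G.egirth) (hm : ∀ v, G.Adj v (m v))
    (hS : IsGPSet (Mycielskian G) S) {u₀ : V} (hu₀ : orig u₀ ∈ S) (hu₀' : twin u₀ ∈ S)
    (hv₀ : twin (m u₀) ∈ S) : orig ⁻¹' S ∩ twin ⁻¹' S ⊆ {u₀} := by
  rintro u₁ ⟨h₁, h₁'⟩
  by_contra hne
  replace hne : u₀ ≠ u₁ := fun h => hne h.symm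
  have hnadj : ¬G.Adj u₀ u₁ := fun h => orig_notMem_of_adj hS hu₀ hu₀' h h₁
  have hv₀u₁ : m u₀ ≠ u₁ := fun h => orig_notMem_of_adj hS hu₀ hu₀' (hm u₀) (h ▸ h₁)
  obtain ⟨c, hu₀c, hcu₁⟩ : ∃ c, G.Adj u₀ c ∧ G.Adj c u₁ := by
    by_contra! h
    exact twin_notMem_of_three_le_length hS hu₀ h₁' (Walk.three_le_length · hne hnadj h)
      (hm u₀) hv₀u₁ hv₀
  have hv₀u₁' : ¬G.Adj (m u₀) u₁ := fun h =>
    twin_notMem_of_common_adj hS hu₀ h₁ hne hnadj (hm u₀) h hv₀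
  have hfar : ∀ q : G.Walk u₁ (m u₀), 3 ≤ q.length := fun q =>
    q.three_le_length hv₀u₁.symm (fun h => hv₀u₁' h.symm) fun c' h h' =>
      (adj_or_adj_of_six_le_egirth hg (hm u₀) hu₀c hcu₁ h'.symm h.symm).elim hnadj hv₀u₁'
  exact orig_notMem_of_three_le_length hS h₁ hv₀ hfar hcu₁.symm hu₀c.symm (hm u₀) hne hu₀

lemma eq_of_adj_of_cover (hm : ∀ v, G.Adj v (m v)) (hS : IsGPSet (Mycielskian G) S)
    (hcover : ∀ v, orig v ∉ S → twin v ∈ S) {u₀ : V} (hu₀ : orig u₀ ∈ S) (hu₀' : twin u₀ ∈ S)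
    (hv₀ : twin (m u₀) ∈ S) {z : V} (hz : G.Adj u₀ z) : z = m u₀ := by
  by_contra hzv
  exact twin_notMem_of_adj_of_adj hS hu₀ (hm u₀) hz (Ne.symm hzv) hv₀
    (hcover z (orig_notMem_of_adj hS hu₀ hu₀' hz))

lemma exists_adj_ne_of_cover [Finite V] (hm : ∀ v, G.Adj v (m v)) (hn : 3 ≤ Nat.card V)
    (hS : IsGPSet (Mycielskian G) S) (hcover : ∀ v, orig v ∉ S → twin v ∈ S) {u₀ : V}
    (hu₀ : orig u₀ ∈ S) (hu₀' : twin u₀ ∈ S) (hv₀ : twin (m u₀) ∈ S) :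
    ∃ w, G.Adj (m u₀) w ∧ w ≠ u₀ := by
  by_contra! hv₀nbr
  obtain ⟨y, hyu₀, hyv₀⟩ := exists_ne_ne_of_three_le_card hn u₀ (m u₀)
  -- `{u₀, m u₀}` is a connected component of `G`
  have hclosed : ∀ a ∈ ({u₀, m u₀} : Set V), ∀ b, G.Adj a b → b ∈ ({u₀, m u₀} : Set V) := by
    rintro a (rfl | rfl) b hab
    exacts [Or.inr (eq_of_adj_of_cover hm hS hcover hu₀ hu₀' hv₀ hab), Or.inl (hv₀nbr b hab)]
  have hfar : ∀ k, ∀ q : G.Walk u₀ y, k ≤ q.length := fun _ q =>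
    absurd (q.mem_of_forall_adj_mem hclosed (by simp)) (by simp [hyu₀, hyv₀])
  by_cases hy : orig y ∈ S
  · exact twin_notMem_of_four_le_length hS hu₀ hy (hfar 4) (hm u₀) (hm y) hv₀
  · exact twin_notMem_of_three_le_length hS hu₀ (hcover y hy) (hfar 3) (hm u₀) hyv₀.symm hv₀

lemma exists_orig_twin_notMem [Finite V] (hg : 4 ≤ G.egirth) (hm : ∀ v, G.Adj v (m v))
    (hmm : Function.Involutive m) (hn : 3 ≤ Nat.card V) (hS : IsGPSet (Mycielskian G) S)
    {u₀ : V} (hu₀ : orig u₀ ∈ S) (hu₀' : twin u₀ ∈ S) (hv₀ : twin (m u₀) ∈ S) :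
    ∃ v, orig v ∉ S ∧ twin v ∉ S := by
  by_contra! hcover
  have hnbr : ∀ {z}, G.Adj u₀ z → z = m u₀ := eq_of_adj_of_cover hm hS hcover hu₀ hu₀' hv₀
  obtain ⟨w, hv₀w, hwu₀⟩ := exists_adj_ne_of_cover hm hn hS hcover hu₀ hu₀' hv₀
  have hu₀w : ¬G.Adj u₀ w := fun h => hv₀w.ne' (hnbr h)
  have hwB : twin w ∈ S :=
    hcover w fun h => twin_notMem_of_common_adj hS hu₀ h hwu₀.symm hu₀w (hm u₀) hv₀w hv₀
  have hmw_ne_u₀ : m w ≠ u₀ := fun h => hv₀w.ne' (by rw [← h, hmm])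
  have hmw_ne_v₀ : m w ≠ m u₀ := fun h => hwu₀ (hmm.injective h)
  have hfar : ∀ q : G.Walk u₀ (m w), 3 ≤ q.length := fun q =>
    q.three_le_length hmw_ne_u₀.symm (fun h => hmw_ne_v₀ (hnbr h)) fun c hc hcmw => by
      obtain rfl := hnbr hc
      exact not_adj_of_four_le_egirth hg hv₀w (hm w) hcmw.symm
  by_cases hmw : orig (m w) ∈ S
  · refine twin_notMem_of_three_le_length hS hmw hu₀' (fun q => ?_) (hm w).symm hwu₀ hwB
    simpa using hfar q.reverse
  · exact twin_notMem_of_three_le_length hS hu₀ (hcover _ hmw) hfar (hm u₀) hmw_ne_v₀.symm hv₀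

lemma ncard_le_of_none_notMem [Finite V] (hg : 6 ≤ G.egirth) (hm : ∀ v, G.Adj v (m v))
    (hmm : Function.Involutive m) (hn : 3 ≤ Nat.card V) (hS : IsGPSet (Mycielskian G) S)
    (hr : none ∉ S) : S.ncard ≤ Nat.card V := by
  have hsplit := ncard_le_ncard_preimage_add S
  rw [Set.inter_singleton_eq_empty.mpr hr, Set.ncard_empty] at hsplit
  set A := orig ⁻¹' S
  set B := twin ⁻¹' S
  have hinter : (A ∩ B).ncard ≤ (A ∪ B)ᶜ.ncard := by
    by_cases h : ∃ u₀ ∈ A ∩ B, m u₀ ∈ B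
    · obtain ⟨u₀, ⟨hu₀, hu₀'⟩, hv₀⟩ := h
      obtain ⟨v, hv⟩ :=
        exists_orig_twin_notMem (le_trans (by norm_num) hg) hm hmm hn hS hu₀ hu₀' hv₀
      calc (A ∩ B).ncard ≤ ({u₀} : Set V).ncard :=
            Set.ncard_le_ncard (inter_preimage_subset_singleton hg hm hS hu₀ hu₀' hv₀)
        _ ≤ (A ∪ B)ᶜ.ncard := by
          rw [Set.ncard_singleton, Nat.one_le_iff_ne_zero, Ne, Set.ncard_eq_zero]
          exact Set.nonempty_iff_ne_empty.mp ⟨v, by simpa [A, B] using hv⟩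
    · push Not at h
      refine Set.ncard_le_ncard_of_injOn m (fun u hu => ?_) hmm.injective.injOn
      simpa [A, B] using ⟨orig_notMem_of_adj hS hu.1 hu.2 (hm u), h u hu⟩
  have := Set.ncard_union_add_ncard_inter A B
  have := Set.ncard_add_ncard_compl (A ∪ B)
  omega

lemma ncard_le_card [Finite V] (hg : 6 ≤ G.egirth) (hm : ∀ v, G.Adj v (m v))
    (hmm : Function.Involutive m) (hn : 4 ≤ Nat.card V) (hS : IsGPSet (Mycielskian G) S) :
    S.ncard ≤ Nat.card V := by
  by_cases hr : none ∈ S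
  · exact ncard_le_of_none_mem hg hm hmm hn hS hr
  · exact ncard_le_of_none_notMem hg hm hmm (by omega) hS hr

end Mycielskian

/-- If `G` has order `n ≥ 4`, girth at least `6` (acyclic graphs have
infinite girth, so qualify) and a perfect matching, then `gp(μ(G)) = n`. -/
theorem gpNumber_mycielskian_perfect_matching [Fintype V] (G : SimpleGraph V)
    (hn : 4 ≤ Fintype.card V) (hg : 6 ≤ G.egirth)
    (hM : ∃ M : Set (Sym2 V), M ⊆ G.edgeSet ∧
      (∀ e ∈ M, ∀ f ∈ M, e ≠ f → ∀ v : V, v ∈ e → v ∉ f) ∧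
      (∀ v : V, ∃ e ∈ M, v ∈ e)) :
    gpNumber (Mycielskian G) = Fintype.card V := by
  obtain ⟨M, hMG, hMdisj, hMcov⟩ := hM
  obtain ⟨m, hm, hmm⟩ := exists_involutive_adj_of_perfect_matching hMG hMdisj hMcov
  rw [← Nat.card_eq_fintype_card] at hn ⊢
  refine gpNumber_eq_of_forall_ncard_le (fun S hS => Mycielskian.ncard_le_card hg hm hmm hn hS)
    Mycielskian.isGPSet_range_twin ?_
  exact Set.ncard_range_of_injective Mycielskian.twin_injective
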